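/- arXiv:2402.13365 — 2 statements merged into one kernel-verified Lean document; each statement's English description precedes it below -/
import Mathlib

section
/- Let G be a finite group. Then the intersection of the normalizers of all 𝓗-subgroups of G equals the intersection of the normalizers of all Sylow subgroups of G (equivalently, the hypercenter Z_∞(G)). That is, ⋂_{H an 𝓗-subgroup of G} N_G(H) = ⋂_{p prime, P ∈ Syl_p(G)} N_G(P). -/
/-- The conjugate `H^g = g⁻¹ H g` of a subgroup `H`. -/
def conjSubgroup {G : Type*} [Group G] (g : G) (H : Subgroup G) : Subgroup G :=
  H.map (MulAut.conj g⁻¹).toMonoidHom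

/-- `H` is pronormal in `G` if for every `g ∈ G` there exists
`x ∈ ⟨H, H^g⟩` with `H^x = H^g`. -/
def IsPronormal {G : Type*} [Group G] (H : Subgroup G) : Prop :=
  ∀ g : G, ∃ x ∈ H ⊔ conjSubgroup g H, conjSubgroup x H = conjSubgroup g H

/-- `H` is weakly normal in `G` if `H^g ≤ N_G(H)` implies `g ∈ N_G(H)`. -/
def IsWeaklyNormal {G : Type*} [Group G] (H : Subgroup G) : Prop :=
  ∀ g : G, conjSubgroup g H ≤ Subgroup.normalizer (H : Set G) → g ∈ Subgroup.normalizer (H : Set G)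

/-- `H` is an `𝓗`-subgroup of `G` if `N_G(H) ∩ H^g ≤ H` for all `g ∈ G`. -/
def IsHSubgroup {G : Type*} [Group G] (H : Subgroup G) : Prop :=
  ∀ g : G, Subgroup.normalizer (H : Set G) ⊓ conjSubgroup g H ≤ H

/-- `H` is an `NE`-subgroup of `G` if `H = N_G(H) ∩ H^G`. -/
def IsNESubgroup {G : Type*} [Group G] (H : Subgroup G) : Prop :=
  H = Subgroup.normalizer (H : Set G) ⊓ Subgroup.normalClosure (H : Set G)

/-- A subgroup `H` satisfies the subnormalizer condition in `G` if for every
subgroup `K` of `G` such that `H` is a normal subgroup of `K`, one has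
`N_G(K) ≤ N_G(H)`. -/
def SubnormalizerCondition {G : Type*} [Group G] (H : Subgroup G) : Prop :=
  ∀ K : Subgroup G, H ≤ K → (H.subgroupOf K).Normal → Subgroup.normalizer (K : Set G) ≤ Subgroup.normalizer (H : Set G)

/-!
Sylow subgroups are `𝓗`-subgroups, which gives one inclusion. Conversely, an `𝓗`-subgroup `H`
is weakly normal, and this makes `N_G(H)` absorb every subgroup `K` with `[K, G] ≤ N_G(H)`.
Let `D` be the intersection of the Sylow normalizers. For a Sylow `p`-subgroup `P`, `D ∩ P` is a
normal `p`-subgroup centralized by every Sylow `q`-subgroup with `q ≠ p`, so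
`G = P · C_G(D ∩ P)` and `[D ∩ P, G] = [D ∩ P, P]`, which is properly smaller than `D ∩ P` as
`P` is nilpotent. Descending along these commutators gives `D ∩ P ≤ N_G(H)`, and the subgroups
`D ∩ P` together contain a Sylow subgroup of `D` for every prime, hence generate `D`.
-/

open Subgroup Pointwise commutatorElement

section

variable {G : Type*} [Group G]

lemma mem_conjSubgroup_iff {g x : G} {H : Subgroup G} :
    x ∈ conjSubgroup g H ↔ g * x * g⁻¹ ∈ H := by
  constructor
  · rintro ⟨h, hh, rfl⟩
    simpa [mul_assoc] using hh
  · intro hx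
    exact ⟨g * x * g⁻¹, hx, by simp [mul_assoc]⟩

lemma IsHSubgroup.isWeaklyNormal [Finite G] {H : Subgroup G} (hH : IsHSubgroup H) :
    IsWeaklyNormal H := by
  intro g hg
  have hconj : conjSubgroup g H = H :=
    eq_of_le_of_card_ge (fun x hx => hH g ⟨hg hx, hx⟩)
      (card_map_of_injective (MulAut.conj g⁻¹).injective).ge
  intro h
  rw [SetLike.mem_coe, SetLike.mem_coe, ← mem_conjSubgroup_iff, hconj]

lemma IsWeaklyNormal.le_normalizer_of_commutator_le {H K : Subgroup G} (hH : IsWeaklyNormal H)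
    (hK : ⁅K, (⊤ : Subgroup G)⁆ ≤ normalizer (H : Set G)) : K ≤ normalizer (H : Set G) := by
  intro k hk
  refine hH k fun y hy => ?_
  rw [mem_conjSubgroup_iff] at hy
  have hcomm : ⁅(k * y * k⁻¹)⁻¹, k⁻¹⁆ ∈ ⁅K, (⊤ : Subgroup G)⁆ := by
    rw [commutator_comm]
    exact commutator_mem_commutator (mem_top _) (inv_mem hk)
  have hy' : y = (k * y * k⁻¹) * ⁅(k * y * k⁻¹)⁻¹, k⁻¹⁆ := by group
  rw [hy']
  exact mul_mem (le_normalizer hy) (hK hcomm)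

lemma IsPGroup.le_of_le_normalizer_sylow {p : ℕ} [Fact p.Prime] {K : Subgroup G}
    (hK : IsPGroup p K) {P : Sylow p G} (h : K ≤ normalizer (P : Set G)) : K ≤ P :=
  hK.sylow_mem_fixedPoints_iff.mp (K.sylow_mem_fixedPoints_iff.mpr h)

lemma Sylow.isHSubgroup {p : ℕ} [Fact p.Prime] (P : Sylow p G) : IsHSubgroup (P : Subgroup G) :=
  fun _ => ((P.isPGroup'.map _).to_le inf_le_right).le_of_le_normalizer_sylow inf_le_left

lemma Sylow.mem_smul_iff {p : ℕ} {g x : G} {P : Sylow p G} :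
    x ∈ ((g • P : Sylow p G) : Subgroup G) ↔ g⁻¹ * x * g ∈ (P : Subgroup G) := by
  rw [Sylow.coe_subgroup_smul, mem_pointwise_smul_iff_inv_smul_mem]
  simp

namespace Subgroup

lemma le_centralizer_of_disjoint {A B : Subgroup G} [A.Normal] (hAB : A ≤ normalizer (B : Set G))
    (hdisj : Disjoint A B) : B ≤ centralizer (A : Set G) := by
  intro b hb
  rw [mem_centralizer_iff]
  intro a ha
  have hA : ⁅a, b⁆ ∈ A := by
    rw [show ⁅a, b⁆ = a * (b * a⁻¹ * b⁻¹) by group]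
    exact mul_mem ha (Normal.conj_mem inferInstance _ (inv_mem ha) b)
  have hB : ⁅a, b⁆ ∈ B := by
    rw [commutatorElement_def]
    exact mul_mem ((mem_normalizer_iff.mp (hAB ha) b).mp hb) (inv_mem hb)
  rw [← commutatorElement_eq_one_iff_mul_comm]
  exact mem_bot.mp (hdisj.le_bot ⟨hA, hB⟩)

lemma commutator_top_le_of_sup_centralizer_eq_top {A P : Subgroup G} [A.Normal]
    (h : P ⊔ centralizer (A : Set G) = ⊤) : ⁅A, ⊤⁆ ≤ ⁅A, P⁆ := by
  rw [commutator_le]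
  intro a ha g _
  obtain ⟨s, hs, c, hc, rfl⟩ : g ∈ (P : Set G) * centralizer (A : Set G) := by
    rw [← mul_normal, h]; exact mem_top g
  have hca : c * a⁻¹ = a⁻¹ * c := (mem_centralizer_iff.mp hc _ (inv_mem ha)).symm
  have : ⁅a, s * c⁆ = ⁅a, s⁆ := by
    simp only [commutatorElement_def]
    calc a * (s * c) * a⁻¹ * (s * c)⁻¹ = a * s * (c * a⁻¹) * c⁻¹ * s⁻¹ := by group
      _ = a * s * a⁻¹ * s⁻¹ := by rw [hca]; group
  rw [this]
  exact commutator_mem_commutator ha hs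

lemma eq_bot_of_commutator_eq_self {Q P : Subgroup G} [Group.IsNilpotent P] (hQP : Q ≤ P)
    (h : ⁅Q, P⁆ = Q) : Q = ⊥ := by
  obtain ⟨n, hn⟩ := (isNilpotent_iff_lowerCentralSeries P).mp inferInstance
  have hle : ∀ k, Q ≤ P.lowerCentralSeries k := by
    intro k
    induction k with
    | zero => exact hQP
    | succ k ih => rw [← h]; exact commutator_mono ih le_rfl
  exact le_bot_iff.mp (hn ▸ hle n)

section Finite

variable [Finite G]

lemma eq_top_of_forall_exists_sylow_le {K : Subgroup G}
    (h : ∀ p, p.Prime → ∃ P : Sylow p G, (P : Subgroup G) ≤ K) : K = ⊤ := by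
  refine eq_top_of_le_card K (Nat.le_of_dvd Nat.card_pos ?_)
  refine (Nat.dvd_iff_prime_pow_dvd_dvd _ _).mpr fun p k hp hpk => ?_
  have := Fact.mk hp
  obtain ⟨P, hPK⟩ := h p hp
  exact (P.pow_dvd_card_of_pow_dvd_card hpk).trans (card_dvd_of_le hPK)

lemma le_of_forall_inf_sylow_le {D K : Subgroup G}
    (h : ∀ p, p.Prime → ∀ P : Sylow p G, D ⊓ P ≤ K) : D ≤ K := by
  rw [← subgroupOf_eq_top]
  refine eq_top_of_forall_exists_sylow_le fun p hp => ?_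
  have := Fact.mk hp
  obtain ⟨R⟩ := (inferInstance : Nonempty (Sylow p D))
  obtain ⟨P, hRP⟩ := (R.isPGroup'.map D.subtype).exists_le_sylow
  refine ⟨R, ?_⟩
  rw [subgroupOf, ← map_le_iff_le_comap]
  exact (le_inf (map_subtype_le _) hRP).trans (h p hp P)

end Finite

section SylowNormalizing

variable {D : Subgroup G} {p : ℕ} [Fact p.Prime]

lemma inf_sylow_le_sylow (hD : ∀ P : Sylow p G, D ≤ normalizer (P : Set G)) (P P' : Sylow p G) :
    D ⊓ P ≤ P' :=
  (P.isPGroup'.to_le inf_le_right).le_of_le_normalizer_sylow (inf_le_left.trans (hD P'))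

lemma normal_inf_sylow [D.Normal] (hD : ∀ P : Sylow p G, D ≤ normalizer (P : Set G))
    (P : Sylow p G) : (D ⊓ P).Normal where
  conj_mem x hx g := by
    refine ⟨Normal.conj_mem inferInstance x hx.1 g, ?_⟩
    have hx' := inf_sylow_le_sylow hD P (g⁻¹ • P) hx
    rwa [Sylow.mem_smul_iff, inv_inv] at hx'

lemma sylow_le_centralizer_inf_sylow [D.Normal]
    (hD : ∀ q, q.Prime → ∀ S : Sylow q G, D ≤ normalizer (S : Set G)) (P : Sylow p G)
    {q : ℕ} [Fact q.Prime] (hqp : q ≠ p) (S : Sylow q G) :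
    (S : Subgroup G) ≤ centralizer ((D ⊓ P : Subgroup G) : Set G) :=
  have := normal_inf_sylow (hD p Fact.out) P
  le_centralizer_of_disjoint (inf_le_left.trans (hD q Fact.out S))
    (IsPGroup.disjoint_of_ne p q hqp.symm _ _ (P.isPGroup'.to_le inf_le_right) S.isPGroup')

lemma sup_centralizer_inf_sylow_eq_top [Finite G] [D.Normal]
    (hD : ∀ q, q.Prime → ∀ S : Sylow q G, D ≤ normalizer (S : Set G)) (P : Sylow p G) :
    (P : Subgroup G) ⊔ centralizer ((D ⊓ P : Subgroup G) : Set G) = ⊤ := by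
  refine eq_top_of_forall_exists_sylow_le fun q hq => ?_
  have := Fact.mk hq
  by_cases hqp : q = p
  · subst hqp
    exact ⟨P, le_sup_left⟩
  · exact ⟨default, (sylow_le_centralizer_inf_sylow hD P hqp default).trans le_sup_right⟩

end SylowNormalizing

lemma normal_iInf_normalizer_sylow :
    (⨅ (p : ℕ) (_ : p.Prime) (P : Sylow p G), normalizer ((P : Subgroup G) : Set G)).Normal where
  conj_mem x hx g := by
    simp only [mem_iInf] at hx ⊢
    intro p hp P
    refine Sylow.smul_eq_iff_mem_normalizer.mp ?_
    rw [mul_smul, mul_smul,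
      Sylow.smul_eq_iff_mem_normalizer.mpr (hx p hp (g⁻¹ • P)), smul_inv_smul]

end Subgroup

lemma IsWeaklyNormal.le_normalizer_of_sup_centralizer_eq_top [Finite G] {H P Q : Subgroup G}
    (hH : IsWeaklyNormal H) [Group.IsNilpotent P] [hQ : Q.Normal] (hQP : Q ≤ P)
    (hPQ : P ⊔ centralizer (Q : Set G) = ⊤) : Q ≤ normalizer (H : Set G) := by
  induction Q using WellFoundedLT.induction generalizing hQ with
  | _ Q ih =>
  by_cases hbot : Q = ⊥
  · simp [hbot]
  have hQ'Q : ⁅Q, (⊤ : Subgroup G)⁆ ≤ Q := commutator_le_left _ _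
  have hQ'P : ⁅Q, (⊤ : Subgroup G)⁆ ≤ ⁅Q, P⁆ := commutator_top_le_of_sup_centralizer_eq_top hPQ
  have hlt : ⁅Q, (⊤ : Subgroup G)⁆ < Q := by
    refine hQ'Q.lt_of_ne fun h => hbot (eq_bot_of_commutator_eq_self hQP ?_)
    exact le_antisymm (commutator_le_left _ _) (h.symm.le.trans hQ'P)
  refine hH.le_normalizer_of_commutator_le (ih _ hlt (hQ'Q.trans hQP) (top_unique ?_))
  exact hPQ.ge.trans (sup_le_sup_left (centralizer_le hQ'Q) _)

lemma IsWeaklyNormal.le_normalizer_of_le_normalizer_sylow [Finite G] {H D : Subgroup G}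
    (hH : IsWeaklyNormal H) [D.Normal]
    (hD : ∀ q, q.Prime → ∀ S : Sylow q G, D ≤ normalizer (S : Set G)) :
    D ≤ normalizer (H : Set G) := by
  refine le_of_forall_inf_sylow_le fun p hp P => ?_
  have := Fact.mk hp
  have := normal_inf_sylow (hD p hp) P
  have := P.isPGroup'.isNilpotent
  exact hH.le_normalizer_of_sup_centralizer_eq_top inf_le_right
    (sup_centralizer_inf_sylow_eq_top hD P)

end

theorem iInf_normalizer_hSubgroup_eq_iInf_normalizer_sylow
    (G : Type*) [Group G] [Finite G] :
    (⨅ (H : Subgroup G) (_ : IsHSubgroup H), Subgroup.normalizer (H : Set G)) =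
      ⨅ (p : ℕ) (_ : p.Prime) (P : Sylow p G), Subgroup.normalizer ((P : Subgroup G) : Set G) := by
  apply le_antisymm
  · refine le_iInf₂ fun p hp => le_iInf fun P => ?_
    have := Fact.mk hp
    exact iInf₂_le (P : Subgroup G) P.isHSubgroup
  · have := normal_iInf_normalizer_sylow (G := G)
    refine le_iInf₂ fun H hH => hH.isWeaklyNormal.le_normalizer_of_le_normalizer_sylow ?_
    exact fun p hp P => iInf₂_le_of_le p hp (iInf_le _ P)
end

section
/- Let G be a finite group and p a prime. Then the intersection of the normalizers of all p-subgroups of G that satisfy the subnormalizer condition in G equals the intersection of the normalizers of all Sylow p-subgroups of G. That is, ⋂_{H a p-subgroup of G satisfying the subnormalizer condition in G} N_G(H) = ⋂_{P ∈ Syl_p(G)} N_G(P). -/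
/-!
A subgroup `H` with the subnormalizer condition is normal in every nilpotent subgroup `S ≥ H`:
its normalizer `K` in `S` normalizes `H`, hence by the condition so does `N_S(K)`, so `K` is
self-normalizing in `S`, which forces `K = S`. Applied to a Sylow `p`-subgroup `P ≥ H`, the
condition then gives `N_G(P) ≤ N_G(H)`. Conversely, a Sylow subgroup normal in `K` is the unique
Sylow subgroup of `K`, so it is normalized by `N_G(K)`.
-/

section

open Subgroup Pointwise

variable {G : Type*} [Group G]

theorem SubnormalizerCondition.normalizer_le_of_le_normalizer {H K : Subgroup G}
    (hH : SubnormalizerCondition H) (hHK : H ≤ K) (hK : K ≤ normalizer (H : Set G)) :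
    normalizer (K : Set G) ≤ normalizer (H : Set G) :=
  hH K hHK ((normal_subgroupOf_iff_le_normalizer hHK).mpr hK)

theorem SubnormalizerCondition.le_normalizer_of_normalizerCondition {H S : Subgroup G}
    (hH : SubnormalizerCondition H) (hHS : H ≤ S) (hS : NormalizerCondition S) :
    S ≤ normalizer (H : Set G) := by
  set K := normalizer (H : Set G) ⊓ S
  have hKS : K ≤ S := inf_le_right
  have hK : normalizer (K : Set G) ≤ normalizer (H : Set G) :=
    hH.normalizer_le_of_le_normalizer (le_inf le_normalizer hHS) inf_le_left
  have hK_self_normalizing : normalizer (K.subgroupOf S : Set S) = K.subgroupOf S := by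
    refine le_antisymm ?_ le_normalizer
    rw [← subgroupOf_normalizer_eq hKS, ← inf_subgroupOf_right]
    exact subgroupOf_mono S (inf_le_inf_right S hK)
  have hK_top := normalizerCondition_iff_only_full_group_self_normalizing.mp hS _ hK_self_normalizing
  exact (subgroupOf_eq_top.mp hK_top).trans inf_le_left

theorem SubnormalizerCondition.normalizer_le_of_isNilpotent {H S : Subgroup G}
    (hH : SubnormalizerCondition H) (hHS : H ≤ S) [Group.IsNilpotent S] :
    normalizer (S : Set G) ≤ normalizer (H : Set G) :=
  hH.normalizer_le_of_le_normalizer hHS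
    (hH.le_normalizer_of_normalizerCondition hHS Group.normalizerCondition_of_isNilpotent)

theorem Sylow.subnormalizerCondition {p : ℕ} [Fact p.Prime] [Finite (Sylow p G)] (P : Sylow p G) :
    SubnormalizerCondition (P : Subgroup G) := by
  intro K hPK hP_normal g hg
  have hgPK : ((g • P : Sylow p G) : Subgroup G) ≤ K := by
    rw [Sylow.coe_subgroup_smul, ← conjAct_pointwise_smul_eq_self hg]
    exact pointwise_smul_le_pointwise_smul_iff.mpr hPK
  have : Unique (Sylow p K) := P.subtype hPK |>.unique_of_normal (by rwa [Sylow.coe_subtype])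
  exact Sylow.smul_eq_iff_mem_normalizer.mp <|
    Sylow.subtype_injective (Subsingleton.elim ((g • P).subtype hgPK) (P.subtype hPK))

end

theorem iInf_normalizer_p_subnormalizerCondition_eq_iInf_normalizer_sylow_p
    (G : Type*) [Group G] [Finite G] (p : ℕ) (hp : p.Prime) :
    (⨅ (H : Subgroup G) (_ : IsPGroup p H ∧ SubnormalizerCondition H), Subgroup.normalizer (H : Set G)) =
      ⨅ P : Sylow p G, Subgroup.normalizer ((P : Subgroup G) : Set G) := by
  have : Fact p.Prime := ⟨hp⟩
  refine le_antisymm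
    (le_iInf fun P => iInf₂_le (P : Subgroup G) ⟨P.isPGroup', P.subnormalizerCondition⟩)
    (le_iInf₂ fun H ⟨hH_pGroup, hH⟩ => ?_)
  obtain ⟨P, hHP⟩ := hH_pGroup.exists_le_sylow
  have : Group.IsNilpotent P := P.isPGroup'.isNilpotent
  exact (iInf_le _ P).trans (hH.normalizer_le_of_isNilpotent hHP)
end
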